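/- arXiv:1008.3427 — 9 statements merged into one kernel-verified Lean document; each statement's English description precedes it below -/
import Mathlib

section
/- For all real numbers λ > 0 and y > 0, e^y > (λy + 1)^{1/λ} · (1 + y - λy²/((λy+1)·log(λy+1))). -/
/-!
Write `t = λy + 1` and `s = log t`, so that `t ^ (1/λ) = e^(s/λ)` and
`e^y ≥ e^(s/λ) (1 + y - s/λ)` by `1 + u ≤ e^u`. It remains to see `s/λ < λy²/(t s)`, i.e.
`t (log t)² < (t - 1)²`: this is `log t < (t - 1)/√t`, the inequality `sinh u > u` at
`u = (log t)/2`.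
-/

open Real

lemma two_mul_mul_exp_lt_exp_two_mul_sub_one {u : ℝ} (hu : 0 < u) :
    2 * u * exp u < exp (2 * u) - 1 := by
  have hsinh : u < sinh u := self_lt_sinh_iff.mpr hu
  have hexp : exp u * exp (-u) = 1 := by rw [← exp_add, add_neg_cancel, exp_zero]
  have hsq : exp (2 * u) = exp u * exp u := by rw [← exp_add, two_mul]
  rw [sinh_eq] at hsinh
  nlinarith [exp_pos u]

lemma log_mul_sqrt_lt_sub_one {t : ℝ} (ht : 1 < t) : log t * √t < t - 1 := by
  have ht0 : 0 < t := by linarith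
  have h := two_mul_mul_exp_lt_exp_two_mul_sub_one (half_pos (log_pos ht))
  rwa [mul_div_cancel₀ _ two_ne_zero, exp_log ht0, exp_half, exp_log ht0] at h

lemma mul_log_sq_lt_sub_one_sq {t : ℝ} (ht : 1 < t) : t * log t ^ 2 < (t - 1) ^ 2 := by
  have h := log_mul_sqrt_lt_sub_one ht
  have hpos : 0 ≤ log t * √t := mul_nonneg (log_nonneg ht.le) (sqrt_nonneg t)
  calc t * log t ^ 2 = (log t * √t) ^ 2 := by
        rw [mul_pow, sq_sqrt (by linarith)]; ring
    _ < (t - 1) ^ 2 := pow_lt_pow_left₀ h hpos two_ne_zero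

lemma exp_mul_one_add_sub_le_exp (a y : ℝ) : exp a * (1 + (y - a)) ≤ exp y := by
  calc exp a * (1 + (y - a)) ≤ exp a * exp (y - a) := by
        gcongr; linarith [add_one_le_exp (y - a)]
    _ = exp y := by rw [← exp_add, add_sub_cancel]

theorem stmt_1 (l y : ℝ) (hl : 0 < l) (hy : 0 < y) :
    Real.exp y >
      (l * y + 1) ^ (1 / l) *
        (1 + y - l * y ^ 2 / ((l * y + 1) * Real.log (l * y + 1))) := by
  set t := l * y + 1 with ht
  have ht1 : 1 < t := by linarith [mul_pos hl hy]
  have hs : 0 < log t := log_pos ht1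
  have hpow : t ^ (1 / l) = exp (log t / l) := by rw [rpow_def_of_pos (by linarith)]; ring_nf
  have hkey : log t / l < l * y ^ 2 / (t * log t) := by
    rw [div_lt_div_iff₀ hl (by positivity)]
    nlinarith [mul_log_sq_lt_sub_one_sq ht1]
  calc t ^ (1 / l) * (1 + y - l * y ^ 2 / (t * log t))
      < exp (log t / l) * (1 + (y - log t / l)) := by
        rw [hpow]; gcongr; linarith
    _ ≤ exp y := exp_mul_one_add_sub_le_exp _ _
end

section
/- For every y > 0, ((1+y)·log(1+y))² - y²·log(1+y) - y² > 0. -/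
/-!
Write `L = log (1 + y)`. The Padé bound `L ≥ 2y / (y + 2)` makes `d = (y + 2) L - 2y`
nonnegative, and `(y + 2)² ((1 + y)² L² - y² L - y²) = y⁴ + d y (3y² + 6y + 4) + (1 + y)² d²`.
-/

lemma sq_mul_sub_sq_mul_sub_sq_pos_of_two_mul_div_le {y L : ℝ} (hy : 0 < y)
    (hL : 2 * y / (y + 2) ≤ L) : 0 < ((1 + y) * L) ^ 2 - y ^ 2 * L - y ^ 2 := by
  rw [div_le_iff₀ (by positivity)] at hL
  set d := (y + 2) * L - 2 * y
  have hd : 0 ≤ d := by linarith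
  have hexpand : (y + 2) ^ 2 * (((1 + y) * L) ^ 2 - y ^ 2 * L - y ^ 2)
      = y ^ 4 + d * y * (3 * y ^ 2 + 6 * y + 4) + ((1 + y) * d) ^ 2 := by ring
  have hpos : 0 < (y + 2) ^ 2 * (((1 + y) * L) ^ 2 - y ^ 2 * L - y ^ 2) := by
    rw [hexpand]; positivity
  exact pos_of_mul_pos_right hpos (by positivity)

theorem stmt_3 (y : ℝ) (hy : 0 < y) :
    ((1 + y) * Real.log (1 + y)) ^ 2 - y ^ 2 * Real.log (1 + y) - y ^ 2 > 0 :=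
  sq_mul_sub_sq_mul_sub_sq_pos_of_two_mul_div_le hy (Real.le_log_one_add_of_nonneg hy.le)
end

section
/- For every y > 0, 2·((1+y)·log(1+y))² - 3y² + 2(1+y)·log(1+y) - 2y > 0. -/
/-!
The Padé bound `log (1 + y) ≥ 2y / (y + 2)` gives `(y + 2) L ≥ 2y(1 + y)` for
`L = (1 + y) log (1 + y)`. The left-hand side is increasing in `L ≥ 0`, and at the
extremal value `L = 2y(1 + y) / (y + 2)` it equals `(5y⁴ + 6y³) / (y + 2)² > 0`.
-/

lemma two_mul_sq_add_two_mul_sub_pos {y L : ℝ} (hy : 0 < y) (hL : 2 * y * (1 + y) ≤ (y + 2) * L) :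
    2 * L ^ 2 - 3 * y ^ 2 + 2 * L - 2 * y > 0 := by
  have hscaled : 0 < (y + 2) ^ 2 * (2 * L ^ 2 - 3 * y ^ 2 + 2 * L - 2 * y) :=
    calc (0 : ℝ) < 5 * y ^ 4 + 6 * y ^ 3 := by positivity
      _ = 2 * (2 * y * (1 + y)) ^ 2 + 2 * (y + 2) * (2 * y * (1 + y))
            - (y + 2) ^ 2 * (3 * y ^ 2 + 2 * y) := by ring
      _ ≤ 2 * ((y + 2) * L) ^ 2 + 2 * (y + 2) * ((y + 2) * L)
            - (y + 2) ^ 2 * (3 * y ^ 2 + 2 * y) := by gcongr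
      _ = (y + 2) ^ 2 * (2 * L ^ 2 - 3 * y ^ 2 + 2 * L - 2 * y) := by ring
  exact pos_of_mul_pos_right hscaled (by positivity)

theorem stmt_4 (y : ℝ) (hy : 0 < y) :
    2 * ((1 + y) * Real.log (1 + y)) ^ 2 - 3 * y ^ 2
      + 2 * (1 + y) * Real.log (1 + y) - 2 * y > 0 := by
  have hpade : 2 * y / (y + 2) ≤ Real.log (1 + y) := Real.le_log_one_add_of_nonneg hy.le
  have hL : 2 * y * (1 + y) ≤ (y + 2) * ((1 + y) * Real.log (1 + y)) := by
    rw [div_le_iff₀ (by positivity)] at hpade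
    calc 2 * y * (1 + y) = (1 + y) * (2 * y) := by ring
      _ ≤ (1 + y) * (Real.log (1 + y) * (y + 2)) := by gcongr
      _ = (y + 2) * ((1 + y) * Real.log (1 + y)) := by ring
  simpa only [mul_assoc] using two_mul_sq_add_two_mul_sub_pos hy hL
end

section
/- For every y > 0, 4·((1+y)·log(1+y))² + 4y(1+y)·log(1+y) - 6y² + 6(1+y)·log(1+y) - 6y > 0. -/
/-! With `u = (1 + y) log (1 + y)` the expression is `4u² + 4yu - 6y² + 6(u - y)`, and the classical
bound `log x > 1 - 1/x` (for `x ≠ 1`) gives `u > y > 0`, so it exceeds `4y² + 4y² - 6y² > 0`. -/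

open Real

lemma Real.sub_one_lt_mul_log {x : ℝ} (hx : 0 < x) (hx1 : x ≠ 1) : x - 1 < x * log x := by
  have h := log_lt_sub_one_of_pos (inv_pos.2 hx) (inv_ne_one.2 hx1)
  rw [log_inv, ← mul_lt_mul_iff_right₀ hx, mul_sub, mul_inv_cancel₀ hx.ne'] at h
  linarith

theorem stmt_5 (y : ℝ) (hy : 0 < y) :
    4 * ((1 + y) * Real.log (1 + y)) ^ 2 + 4 * y * (1 + y) * Real.log (1 + y)
      - 6 * y ^ 2 + 6 * (1 + y) * Real.log (1 + y) - 6 * y > 0 := by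
  have hu : y < (1 + y) * log (1 + y) := by
    simpa using sub_one_lt_mul_log (x := 1 + y) (by positivity) (by linarith)
  set u := (1 + y) * log (1 + y)
  calc 4 * u ^ 2 + 4 * y * (1 + y) * log (1 + y) - 6 * y ^ 2 + 6 * (1 + y) * log (1 + y) - 6 * y
      = 4 * u ^ 2 + 4 * y * u - 6 * y ^ 2 + 6 * (u - y) := by ring
    _ > 0 := by nlinarith [mul_lt_mul_of_pos_left hu hy]
end

section
/- The Kamps weight function w₃(λ,x) = 1 - e^{-x/λ} is log-supermodular on (0,∞)×(0,∞): for all 0 < θ ≤ λ and 0 < x₁ ≤ x₂, w₃(θ,x₁)·w₃(λ,x₂) ≥ w₃(θ,x₂)·w₃(λ,x₁). -/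
/-! With `a = exp (-x₁ / l)`, `b = exp (-x₂ / l)` and `p = l / θ ≥ 1`, the weights at `θ` are
`1 - a ^ p` and `1 - b ^ p`, so the inequality says that `(1 - t ^ p) / (1 - t)` is monotone on
`[0, 1)`. This quotient is the slope of the convex function `t ↦ t ^ p` between `t` and `1`, and
secant slopes of a convex function increase with the free endpoint. -/

open Real Set

theorem one_sub_rpow_mul_one_sub_le {p a b : ℝ} (hp : 1 ≤ p) (hb : 0 ≤ b) (hba : b ≤ a)
    (ha : a ≤ 1) : (1 - b ^ p) * (1 - a) ≤ (1 - a ^ p) * (1 - b) := by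
  rcases ha.eq_or_lt with rfl | ha
  · simp
  have hb1 : b < 1 := hba.trans_lt ha
  have slope := (convexOn_rpow hp).secant_mono (a := 1) (mem_Ici.2 zero_le_one)
    (mem_Ici.2 hb) (mem_Ici.2 (hb.trans hba)) hb1.ne ha.ne hba
  simp only [one_rpow] at slope
  rwa [← neg_div_neg_eq, ← neg_div_neg_eq (a ^ p - 1), neg_sub, neg_sub, neg_sub, neg_sub,
    div_le_div_iff₀ (sub_pos.2 hb1) (sub_pos.2 ha)] at slope

theorem stmt_11 (θ l x₁ x₂ : ℝ) (hθ : 0 < θ) (hθl : θ ≤ l)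
    (hx₁ : 0 < x₁) (hx : x₁ ≤ x₂) :
    (1 - Real.exp (-x₁ / θ)) * (1 - Real.exp (-x₂ / l)) ≥
      (1 - Real.exp (-x₂ / θ)) * (1 - Real.exp (-x₁ / l)) := by
  have hl : 0 < l := hθ.trans_le hθl
  have weight_at_θ (x : ℝ) : exp (-x / θ) = exp (-x / l) ^ (l / θ) := by
    rw [← exp_mul]
    field_simp
  rw [weight_at_θ x₁, weight_at_θ x₂]
  refine one_sub_rpow_mul_one_sub_le ((one_le_div hθ).2 hθl) (exp_pos _).le ?_ ?_
  · gcongr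
  · exact exp_le_one_iff.2 (div_nonpos_of_nonpos_of_nonneg (by linarith) hl.le)
end

section
/- The function w₅(λ,x) = ((1+λ)^x - 1)/(xλ) is log-supermodular on (0,∞)×(0,∞): for all 0 < θ ≤ λ and 0 < x₁ ≤ x₂, w₅(θ,x₁)·w₅(λ,x₂) ≥ w₅(θ,x₂)·w₅(λ,x₁). -/
/-!
Put `a = 1 + θ`, `b = 1 + l`. Clearing the denominators, which agree on both sides, the claim
becomes `(a ^ x₂ - 1) (b ^ x₁ - 1) ≤ (a ^ x₁ - 1) (b ^ x₂ - 1)`, i.e. that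
`x ↦ log (b ^ x - 1) - log (a ^ x - 1)` is monotone on `(0, ∞)`. The derivative of
`x ↦ log (c ^ x - 1)` is `ψ (c ^ x) / x` with `ψ u = u log u / (u - 1)`, and `ψ` is monotone on
`(1, ∞)` because `ψ' u = (u - 1 - log u) / (u - 1) ^ 2 ≥ 0`; since `a ^ x ≤ b ^ x`, the derivative
of the difference is nonnegative.
-/

open Real Set

lemma monotoneOn_Ioi_of_hasDerivAt_nonneg {f f' : ℝ → ℝ} {c : ℝ}
    (hf : ∀ x ∈ Ioi c, HasDerivAt f (f' x) x) (hf' : ∀ x ∈ Ioi c, 0 ≤ f' x) :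
    MonotoneOn f (Ioi c) := by
  refine monotoneOn_of_hasDerivWithinAt_nonneg (convex_Ioi c) (f' := f')
    (fun x hx => (hf x hx).continuousAt.continuousWithinAt) ?_ ?_
  · rw [interior_Ioi]
    exact fun x hx => (hf x hx).hasDerivWithinAt
  · rwa [interior_Ioi]

lemma hasDerivAt_mul_log_div_sub_one {u : ℝ} (hu : 1 < u) :
    HasDerivAt (fun u => u * log u / (u - 1)) ((u - 1 - log u) / (u - 1) ^ 2) u := by
  have hne : u - 1 ≠ 0 := by linarith
  refine ((hasDerivAt_mul_log (by positivity)).fun_div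
    ((hasDerivAt_id' u).sub_const 1) hne).congr_deriv ?_
  ring

lemma monotoneOn_mul_log_div_sub_one :
    MonotoneOn (fun u => u * log u / (u - 1)) (Ioi 1) :=
  monotoneOn_Ioi_of_hasDerivAt_nonneg (fun _ hu => hasDerivAt_mul_log_div_sub_one hu)
    fun u (hu : 1 < u) =>
      div_nonneg (sub_nonneg.2 (log_le_sub_one_of_pos (by linarith))) (sq_nonneg _)

lemma hasDerivAt_log_rpow_sub_one {c x : ℝ} (hc : 1 < c) (hx : 0 < x) :
    HasDerivAt (fun x => log (c ^ x - 1)) (c ^ x * log (c ^ x) / (c ^ x - 1) / x) x := by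
  have hc₀ : 0 < c := by linarith
  have hne : c ^ x - 1 ≠ 0 := by linarith [one_lt_rpow hc hx]
  convert ((hasStrictDerivAt_const_rpow hc₀ x).hasDerivAt.sub_const 1).log hne using 1
  rw [log_rpow hc₀]
  field_simp

lemma monotoneOn_log_rpow_sub_one_sub {a b : ℝ} (ha : 1 < a) (hab : a ≤ b) :
    MonotoneOn (fun x : ℝ => log (b ^ x - 1) - log (a ^ x - 1)) (Ioi 0) := by
  have hb : 1 < b := ha.trans_le hab
  refine monotoneOn_Ioi_of_hasDerivAt_nonneg
    (fun x hx => (hasDerivAt_log_rpow_sub_one hb hx).fun_sub (hasDerivAt_log_rpow_sub_one ha hx))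
    fun x (hx : 0 < x) => ?_
  have ha_x : 1 < a ^ x := one_lt_rpow ha hx
  have hab_x : a ^ x ≤ b ^ x := rpow_le_rpow (by linarith) hab hx.le
  exact sub_nonneg.2 <| div_le_div_of_nonneg_right
    (monotoneOn_mul_log_div_sub_one ha_x (ha_x.trans_le hab_x) hab_x) hx.le

lemma rpow_sub_one_mul_rpow_sub_one_le {a b x₁ x₂ : ℝ} (ha : 1 < a) (hab : a ≤ b)
    (hx₁ : 0 < x₁) (hx : x₁ ≤ x₂) :
    (a ^ x₂ - 1) * (b ^ x₁ - 1) ≤ (a ^ x₁ - 1) * (b ^ x₂ - 1) := by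
  have hb : 1 < b := ha.trans_le hab
  have hx₂ : 0 < x₂ := hx₁.trans_le hx
  have hmono := monotoneOn_log_rpow_sub_one_sub ha hab (mem_Ioi.2 hx₁) (mem_Ioi.2 hx₂) hx
  have ha₁ : 0 < a ^ x₁ - 1 := sub_pos.2 (one_lt_rpow ha hx₁)
  have ha₂ : 0 < a ^ x₂ - 1 := sub_pos.2 (one_lt_rpow ha hx₂)
  have hb₁ : 0 < b ^ x₁ - 1 := sub_pos.2 (one_lt_rpow hb hx₁)
  have hb₂ : 0 < b ^ x₂ - 1 := sub_pos.2 (one_lt_rpow hb hx₂)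
  rw [← log_le_log_iff (by positivity) (by positivity), log_mul ha₂.ne' hb₁.ne',
    log_mul ha₁.ne' hb₂.ne']
  linarith

theorem stmt_12 (θ l x₁ x₂ : ℝ) (hθ : 0 < θ) (hθl : θ ≤ l)
    (hx₁ : 0 < x₁) (hx : x₁ ≤ x₂) :
    (((1 + θ) ^ x₁ - 1) / (x₁ * θ)) * (((1 + l) ^ x₂ - 1) / (x₂ * l)) ≥
      (((1 + θ) ^ x₂ - 1) / (x₂ * θ)) * (((1 + l) ^ x₁ - 1) / (x₁ * l)) := by
  have hl : 0 < l := hθ.trans_le hθl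
  have hx₂ : 0 < x₂ := hx₁.trans_le hx
  have hkey := rpow_sub_one_mul_rpow_sub_one_le (by linarith : 1 < 1 + θ)
    (by linarith : 1 + θ ≤ 1 + l) hx₁ hx
  calc (((1 + θ) ^ x₂ - 1) / (x₂ * θ)) * (((1 + l) ^ x₁ - 1) / (x₁ * l))
      = ((1 + θ) ^ x₂ - 1) * ((1 + l) ^ x₁ - 1) / (x₁ * θ * x₂ * l) := by ring
    _ ≤ ((1 + θ) ^ x₁ - 1) * ((1 + l) ^ x₂ - 1) / (x₁ * θ * x₂ * l) := by gcongr
    _ = (((1 + θ) ^ x₁ - 1) / (x₁ * θ)) * (((1 + l) ^ x₂ - 1) / (x₂ * l)) := by ring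
end

section
/- The function w₆(λ,x) = xλ/log(1+xλ) is log-supermodular on (0,∞)×(0,∞): for all 0 < θ ≤ λ and 0 < x₁ ≤ x₂, w₆(θ,x₁)·w₆(λ,x₂) ≥ w₆(θ,x₂)·w₆(λ,x₁). -/
/-!
Writing `x = e^a`, `λ = e^b`, the claim is that `(a, b) ↦ log log (1 + e^(a+b))` is submodular,
i.e. that `u ↦ log log (1 + e^u)` is concave. Multiplicatively: for `c ≥ 1` the ratio
`log (1 + c s) / log (1 + s)` decreases in `s`. Its derivative has the sign of
`c (1 + s) log (1 + s) - (1 + c s) log (1 + c s)`, which is `≤ 0` because the secant slope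
`x log x / (x - 1)` of the convex function `x log x` through `(1, 0)` increases in `x`.
-/

open Real Set

theorem mul_log_div_sub_one_le {x y : ℝ} (hx : 1 < x) (hxy : x ≤ y) :
    x * log x / (x - 1) ≤ y * log y / (y - 1) := by
  simpa using convexOn_mul_log.secant_mono (a := 1) (by norm_num)
    (mem_Ici.2 (by linarith)) (mem_Ici.2 (by linarith)) hx.ne' (by linarith : 1 < y).ne' hxy

theorem mul_one_add_mul_log_one_add_le {c s : ℝ} (hc : 1 ≤ c) (hs : 0 < s) :
    c * ((1 + s) * log (1 + s)) ≤ (1 + c * s) * log (1 + c * s) := by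
  have hcs : 0 < c * s := by positivity
  have h := mul_log_div_sub_one_le (x := 1 + s) (y := 1 + c * s) (by linarith) (by nlinarith)
  rw [add_sub_cancel_left, add_sub_cancel_left, div_le_div_iff₀ hs hcs] at h
  exact le_of_mul_le_mul_right (by linarith) hs

theorem antitoneOn_log_one_add_mul_div_log_one_add {c : ℝ} (hc : 1 ≤ c) :
    AntitoneOn (fun s ↦ log (1 + c * s) / log (1 + s)) (Ioi 0) := by
  have hderiv : ∀ s ∈ Ioi (0 : ℝ), HasDerivAt (fun s ↦ log (1 + c * s) / log (1 + s))
      ((c / (1 + c * s) * log (1 + s) - log (1 + c * s) * (1 / (1 + s))) / log (1 + s) ^ 2) s := by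
    intro s (hs : 0 < s)
    have h₁ : HasDerivAt (fun u ↦ 1 + c * u) c s := by
      simpa using ((hasDerivAt_id s).const_mul c).const_add 1
    have h₂ : HasDerivAt (fun u ↦ 1 + u) 1 s := by
      simpa using (hasDerivAt_id s).const_add 1
    exact (h₁.log (by nlinarith)).div (h₂.log (by linarith)) (log_pos (by linarith)).ne'
  refine antitoneOn_of_deriv_nonpos (convex_Ioi 0)
    (fun s hs ↦ (hderiv s hs).continuousAt.continuousWithinAt) ?_ ?_
  · rw [interior_Ioi]
    exact fun s hs ↦ (hderiv s hs).differentiableAt.differentiableWithinAt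
  · rw [interior_Ioi]
    intro s (hs : 0 < s)
    rw [(hderiv s hs).deriv]
    refine div_nonpos_of_nonpos_of_nonneg ?_ (sq_nonneg _)
    rw [sub_nonpos, div_mul_eq_mul_div, mul_one_div,
      div_le_div_iff₀ (by nlinarith) (by linarith)]
    linarith [mul_one_add_mul_log_one_add_le hc hs]

theorem log_one_add_mul_mul_log_one_add_le {c s t : ℝ} (hc : 1 ≤ c) (hs : 0 < s) (hst : s ≤ t) :
    log (1 + c * t) * log (1 + s) ≤ log (1 + c * s) * log (1 + t) := by
  have h := antitoneOn_log_one_add_mul_div_log_one_add hc (mem_Ioi.2 hs)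
    (mem_Ioi.2 (hs.trans_le hst)) hst
  rwa [div_le_div_iff₀ (log_pos (by linarith)) (log_pos (by linarith))] at h

theorem stmt_13 (θ l x₁ x₂ : ℝ) (hθ : 0 < θ) (hθl : θ ≤ l)
    (hx₁ : 0 < x₁) (hx : x₁ ≤ x₂) :
    (x₁ * θ / Real.log (1 + x₁ * θ)) * (x₂ * l / Real.log (1 + x₂ * l)) ≥
      (x₂ * θ / Real.log (1 + x₂ * θ)) * (x₁ * l / Real.log (1 + x₁ * l)) := by
  have hl : 0 < l := hθ.trans_le hθl
  have hx₂ : 0 < x₂ := hx₁.trans_le hx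
  have hscale : ∀ y, x₂ / x₁ * (x₁ * y) = x₂ * y := fun y ↦ by field_simp
  have key := log_one_add_mul_mul_log_one_add_le ((one_le_div hx₁).2 hx)
    (mul_pos hx₁ hθ) (mul_le_mul_of_nonneg_left hθl hx₁.le)
  rw [hscale, hscale] at key
  have hlog : ∀ {x y : ℝ}, 0 < x → 0 < y → 0 < log (1 + x * y) :=
    fun hx hy ↦ log_pos (by nlinarith)
  rw [ge_iff_le, div_mul_div_comm, div_mul_div_comm, mul_mul_mul_comm, mul_comm x₂ x₁,
    mul_mul_mul_comm]
  exact div_le_div_of_nonneg_left (by positivity)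
    (mul_pos (hlog hx₁ hθ) (hlog hx₂ hl)) (by linarith)
end

section
/- Let X be a positive random variable and let w(λ,·), for λ > 0, be a family of nondecreasing nonnegative weight functions on [0,∞) that is log-supermodular in (λ,x) (i.e., w(θ,x₁)·w(λ,x₂) ≥ w(θ,x₂)·w(λ,x₁) for θ ≤ λ, x₁ ≤ x₂). Assume for θ ≤ λ that the expectations E[w(θ,X)], E[w(λ,X)] are positive and E[X·w(θ,X)], E[X·w(λ,X)] are finite. Then H[θ,X] = E[X·w(θ,X)]/E[w(θ,X)] ≤ E[X·w(λ,X)]/E[w(λ,X)] = H[λ,X]. -/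
/-!
Symmetrization (Chebyshev's integral inequality). With `a = w θ ∘ X` and `b = w λ ∘ X`,
log-supermodularity makes `(X ω - X ω') (b ω a ω' - a ω b ω')` nonnegative for every pair
`(ω, ω')`. Integrating against `μ ⊗ μ` and expanding gives
`2 (E[X b] E[a] - E[X a] E[b]) ≥ 0`, which is the inequality of the two weighted means.
-/

open MeasureTheory

lemma sub_mul_sub_nonneg_of_mul_le_mul {s : Set ℝ} {u v : ℝ → ℝ}
    (h : ∀ x₁ ∈ s, ∀ x₂ ∈ s, x₁ ≤ x₂ → u x₂ * v x₁ ≤ u x₁ * v x₂)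
    {x y : ℝ} (hx : x ∈ s) (hy : y ∈ s) :
    0 ≤ (x - y) * (v x * u y - u x * v y) := by
  rcases le_total y x with hyx | hxy
  · nlinarith [h y hy x hx hyx]
  · nlinarith [h x hx y hy hxy]

section Symmetrization

variable {Ω : Type*} [MeasurableSpace Ω] {μ : Measure Ω} [SFinite μ] {X a b : Ω → ℝ}

lemma integral_mul_mul_integral_le
    (ha : Integrable a μ) (hb : Integrable b μ)
    (hXa : Integrable (fun ω => X ω * a ω) μ) (hXb : Integrable (fun ω => X ω * b ω) μ)
    (hpair : ∀ ω ω', 0 ≤ (X ω - X ω') * (b ω * a ω' - a ω * b ω')) :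
    (∫ ω, X ω * a ω ∂μ) * (∫ ω, b ω ∂μ) ≤ (∫ ω, X ω * b ω ∂μ) * (∫ ω, a ω ∂μ) := by
  have hexpand : (fun z : Ω × Ω => (X z.1 - X z.2) * (b z.1 * a z.2 - a z.1 * b z.2)) =
      fun z => ((X z.1 * b z.1) * a z.2 - (X z.1 * a z.1) * b z.2) -
        (b z.1 * (X z.2 * a z.2) - a z.1 * (X z.2 * b z.2)) := by
    funext z; ring
  have hXba : Integrable (fun z : Ω × Ω => (X z.1 * b z.1) * a z.2) (μ.prod μ) := hXb.mul_prod ha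
  have hXab : Integrable (fun z : Ω × Ω => (X z.1 * a z.1) * b z.2) (μ.prod μ) := hXa.mul_prod hb
  have hbXa : Integrable (fun z : Ω × Ω => b z.1 * (X z.2 * a z.2)) (μ.prod μ) := hb.mul_prod hXa
  have haXb : Integrable (fun z : Ω × Ω => a z.1 * (X z.2 * b z.2)) (μ.prod μ) := ha.mul_prod hXb
  have hsym : 0 ≤ ∫ z, (X z.1 - X z.2) * (b z.1 * a z.2 - a z.1 * b z.2) ∂μ.prod μ :=
    integral_nonneg fun z => hpair z.1 z.2
  rw [hexpand, integral_sub (hXba.sub' hXab) (hbXa.sub' haXb), integral_sub hXba hXab,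
    integral_sub hbXa haXb, integral_prod_mul (fun ω => X ω * b ω) a,
    integral_prod_mul (fun ω => X ω * a ω) b, integral_prod_mul b (fun ω => X ω * a ω),
    integral_prod_mul a (fun ω => X ω * b ω)] at hsym
  linarith

lemma integral_mul_div_integral_le
    (ha : Integrable a μ) (hb : Integrable b μ)
    (hXa : Integrable (fun ω => X ω * a ω) μ) (hXb : Integrable (fun ω => X ω * b ω) μ)
    (ha_pos : 0 < ∫ ω, a ω ∂μ) (hb_pos : 0 < ∫ ω, b ω ∂μ)
    (hpair : ∀ ω ω', 0 ≤ (X ω - X ω') * (b ω * a ω' - a ω * b ω')) :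
    (∫ ω, X ω * a ω ∂μ) / (∫ ω, a ω ∂μ) ≤ (∫ ω, X ω * b ω ∂μ) / (∫ ω, b ω ∂μ) := by
  rw [div_le_div_iff₀ ha_pos hb_pos]
  exact integral_mul_mul_integral_le ha hb hXa hXb hpair

end Symmetrization

theorem stmt_18_general {Ω : Type*} [MeasurableSpace Ω] (μ : Measure Ω)
    [IsProbabilityMeasure μ] (X : Ω → ℝ)
    (hX : ∀ ω, 0 < X ω)
    (w : ℝ → ℝ → ℝ)
    (hlsm : ∀ θ l x₁ x₂, 0 < θ → θ ≤ l → 0 ≤ x₁ → x₁ ≤ x₂ →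
      w θ x₁ * w l x₂ ≥ w θ x₂ * w l x₁)
    (θ l : ℝ) (hθ : 0 < θ) (hθl : θ ≤ l)
    (hθi : Integrable (fun ω => w θ (X ω)) μ)
    (hli : Integrable (fun ω => w l (X ω)) μ)
    (hθp : 0 < ∫ ω, w θ (X ω) ∂μ)
    (hlp : 0 < ∫ ω, w l (X ω) ∂μ)
    (hXθ : Integrable (fun ω => X ω * w θ (X ω)) μ)
    (hXl : Integrable (fun ω => X ω * w l (X ω)) μ) :
    (∫ ω, X ω * w θ (X ω) ∂μ) / (∫ ω, w θ (X ω) ∂μ) ≤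
      (∫ ω, X ω * w l (X ω) ∂μ) / (∫ ω, w l (X ω) ∂μ) :=
  integral_mul_div_integral_le hθi hli hXθ hXl hθp hlp fun ω ω' =>
    sub_mul_sub_nonneg_of_mul_le_mul (s := Set.Ici 0)
      (fun _ hx₁ _ _ h => hlsm θ l _ _ hθ hθl hx₁ h) (hX ω).le (hX ω').le

theorem stmt_18 {Ω : Type*} [MeasurableSpace Ω] (μ : Measure Ω)
    [IsProbabilityMeasure μ] (X : Ω → ℝ) (hXm : Measurable X)
    (hX : ∀ ω, 0 < X ω)
    (w : ℝ → ℝ → ℝ)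
    (hmono : ∀ l, 0 < l → MonotoneOn (w l) (Set.Ici 0))
    (hnn : ∀ l x, 0 < l → 0 ≤ x → 0 ≤ w l x)
    (hlsm : ∀ θ l x₁ x₂, 0 < θ → θ ≤ l → 0 ≤ x₁ → x₁ ≤ x₂ →
      w θ x₁ * w l x₂ ≥ w θ x₂ * w l x₁)
    (θ l : ℝ) (hθ : 0 < θ) (hθl : θ ≤ l)
    (hθi : Integrable (fun ω => w θ (X ω)) μ)
    (hli : Integrable (fun ω => w l (X ω)) μ)
    (hθp : 0 < ∫ ω, w θ (X ω) ∂μ)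
    (hlp : 0 < ∫ ω, w l (X ω) ∂μ)
    (hXθ : Integrable (fun ω => X ω * w θ (X ω)) μ)
    (hXl : Integrable (fun ω => X ω * w l (X ω)) μ) :
    (∫ ω, X ω * w θ (X ω) ∂μ) / (∫ ω, w θ (X ω) ∂μ) ≤
      (∫ ω, X ω * w l (X ω) ∂μ) / (∫ ω, w l (X ω) ∂μ) :=
  stmt_18_general μ X hX w hlsm θ l hθ hθl hθi hli hθp hlp hXθ hXl
end

section
/- For every λ > 0, the limit as x ↓ 0 of the partial derivative in x of w₇(λ,x) = (log(1+x+λ)/(x+λ))·(x/log(1+x)) equals (2λ - λ·log(1+λ) - 2·log(1+λ) + λ²·log(1+λ))/(2λ²(1+λ)), and this quantity is positive. -/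
/-!
Write `w₇(λ, x) = f x * g x` with `f x = log (1 + x + λ) / (x + λ)`, smooth at `0`, and
`g x = x / log (1 + x)`. Near `0`, `g x → 1` and `g' x → 1/2` (L'Hôpital), so
`∂ₓ w₇(λ, x) → f' 0 + f 0 / 2`, which is the stated quotient.
Its numerator is `2λ + (λ - 2)(λ + 1) log (1 + λ)`; for `λ < 2` it is positive by the bound
`log y < sinh (log y) = (y - y⁻¹) / 2`.
-/

open Filter Real Topology

lemma Real.log_lt_sub_inv_div_two {y : ℝ} (hy : 1 < y) : log y < (y - y⁻¹) / 2 := by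
  rw [← sinh_log (by linarith)]
  exact self_lt_sinh_iff.mpr (log_pos hy)

lemma Real.hasDerivAt_log_one_add {x : ℝ} (hx : 0 < 1 + x) :
    HasDerivAt (fun y => log (1 + y)) (1 + x)⁻¹ x := by
  simpa using ((hasDerivAt_id x).const_add 1).log hx.ne'

lemma eventually_one_add_pos_and_log_one_add_ne_zero :
    ∀ᶠ x in 𝓝[≠] (0 : ℝ), 0 < 1 + x ∧ log (1 + x) ≠ 0 := by
  filter_upwards [self_mem_nhdsWithin,
    nhdsWithin_le_nhds (Ioi_mem_nhds (by norm_num : (-1 : ℝ) < 0))]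
    with x (hx0 : x ≠ 0) (hx1 : -1 < x)
  exact ⟨by linarith, log_ne_zero_of_pos_of_ne_one (by linarith) (by simpa using hx0)⟩

lemma tendsto_div_log_one_add : Tendsto (fun x => x / log (1 + x)) (𝓝[≠] 0) (𝓝 1) := by
  have hslope :=
    hasDerivAt_iff_tendsto_slope_zero.mp (hasDerivAt_log_one_add (x := 0) (by norm_num))
  simpa [div_eq_inv_mul] using hslope.inv₀ (by norm_num)

lemma hasDerivAt_div_log_one_add {x : ℝ} (hx : 0 < 1 + x) (hlog : log (1 + x) ≠ 0) :
    HasDerivAt (fun y => y / log (1 + y)) ((log (1 + x) - x / (1 + x)) / log (1 + x) ^ 2) x := by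
  refine ((hasDerivAt_id' x).div (hasDerivAt_log_one_add hx) hlog).congr_deriv ?_
  ring

lemma tendsto_deriv_div_log_one_add :
    Tendsto (deriv fun x => x / log (1 + x)) (𝓝[≠] 0) (𝓝 (1 / 2)) := by
  have hlhopital : Tendsto (fun x => (log (1 + x) - x / (1 + x)) / log (1 + x) ^ 2)
      (𝓝[≠] 0) (𝓝 (1 / 2)) := by
    refine HasDerivAt.lhopital_zero_nhdsNE (f' := fun x => x / (1 + x) ^ 2)
      (g' := fun x => 2 * log (1 + x) / (1 + x)) ?_ ?_ ?_ ?_ ?_ ?_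
    · filter_upwards [eventually_one_add_pos_and_log_one_add_ne_zero] with x ⟨hx, _⟩
      refine ((hasDerivAt_log_one_add hx).sub
        ((hasDerivAt_id' x).div ((hasDerivAt_id' x).const_add 1) hx.ne')).congr_deriv ?_
      field_simp
      ring
    · filter_upwards [eventually_one_add_pos_and_log_one_add_ne_zero] with x ⟨hx, _⟩
      refine ((hasDerivAt_log_one_add hx).pow 2).congr_deriv ?_
      field_simp
      ring
    · filter_upwards [eventually_one_add_pos_and_log_one_add_ne_zero] with x ⟨hx, hlog⟩
      exact div_ne_zero (mul_ne_zero two_ne_zero hlog) hx.ne'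
    · have hcont : ContinuousAt (fun x : ℝ => log (1 + x) - x / (1 + x)) 0 := by
        fun_prop (disch := norm_num)
      simpa using hcont.tendsto.mono_left nhdsWithin_le_nhds
    · have hcont : ContinuousAt (fun x : ℝ => log (1 + x) ^ 2) 0 := by
        fun_prop (disch := norm_num)
      simpa using hcont.tendsto.mono_left nhdsWithin_le_nhds
    · have hcont : ContinuousAt (fun x : ℝ => 2 * (1 + x)) 0 := by fun_prop
      have h2 : Tendsto (fun x : ℝ => 2 * (1 + x)) (𝓝[≠] 0) (𝓝 2) := by
        simpa using hcont.tendsto.mono_left nhdsWithin_le_nhds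
      refine (tendsto_div_log_one_add.div h2 two_ne_zero).congr' ?_
      filter_upwards [eventually_one_add_pos_and_log_one_add_ne_zero] with x ⟨hx, hlog⟩
      simp only [Pi.div_apply]
      field_simp
  refine hlhopital.congr' ?_
  filter_upwards [eventually_one_add_pos_and_log_one_add_ne_zero] with x ⟨hx, hlog⟩
  exact (hasDerivAt_div_log_one_add hx hlog).deriv.symm

lemma tendsto_deriv_mul_div_log_one_add {f f' : ℝ → ℝ} {a b : ℝ}
    (hf : ∀ᶠ x in 𝓝[≠] 0, HasDerivAt f (f' x) x) (hfa : Tendsto f (𝓝[≠] 0) (𝓝 a))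
    (hf'b : Tendsto f' (𝓝[≠] 0) (𝓝 b)) :
    Tendsto (deriv fun x => f x * (x / log (1 + x))) (𝓝[≠] 0) (𝓝 (b + a / 2)) := by
  rw [show b + a / 2 = b * 1 + a * (1 / 2) by ring]
  refine ((hf'b.mul tendsto_div_log_one_add).add (hfa.mul tendsto_deriv_div_log_one_add)).congr' ?_
  filter_upwards [hf, eventually_one_add_pos_and_log_one_add_ne_zero] with x hfx ⟨hx, hlog⟩
  have hg := hasDerivAt_div_log_one_add hx hlog
  rw [hg.deriv]
  exact (hfx.mul hg).deriv.symm

lemma Real.log_one_add_lt_of_pos {x : ℝ} (hx : 0 < x) :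
    log (1 + x) < x * (2 + x) / (2 * (1 + x)) := by
  convert log_lt_sub_inv_div_two (by linarith : 1 < 1 + x) using 1
  field_simp
  ring

lemma two_mul_add_mul_log_one_add_pos {l : ℝ} (hl : 0 < l) :
    0 < 2 * l + (l - 2) * (l + 1) * log (1 + l) := by
  have hlog : 0 < log (1 + l) := log_pos (by linarith)
  rcases le_or_gt 2 l with h2 | h2
  · nlinarith [mul_nonneg (mul_nonneg (sub_nonneg.2 h2) (by linarith : 0 ≤ l + 1)) hlog.le]
  · have hcoef : 0 < (2 - l) * (l + 1) := by nlinarith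
    suffices (2 - l) * (l + 1) * log (1 + l) < 2 * l by linarith
    calc (2 - l) * (l + 1) * log (1 + l)
        < (2 - l) * (l + 1) * (l * (2 + l) / (2 * (1 + l))) :=
          mul_lt_mul_of_pos_left (log_one_add_lt_of_pos hl) hcoef
      _ = 2 * l - l ^ 3 / 2 := by field_simp; ring
      _ < 2 * l := by nlinarith [pow_pos hl 3]

theorem stmt_19 (l : ℝ) (hl : 0 < l) :
    Tendsto
      (fun x : ℝ => deriv
        (fun x : ℝ => Real.log (1 + x + l) / (x + l) * (x / Real.log (1 + x))) x)
      (nhdsWithin 0 (Set.Ioi 0))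
      (nhds ((2 * l - l * Real.log (1 + l) - 2 * Real.log (1 + l)
          + l ^ 2 * Real.log (1 + l)) / (2 * l ^ 2 * (1 + l)))) ∧
    0 < (2 * l - l * Real.log (1 + l) - 2 * Real.log (1 + l)
          + l ^ 2 * Real.log (1 + l)) / (2 * l ^ 2 * (1 + l)) := by
  set f' : ℝ → ℝ := fun x => ((1 + x + l)⁻¹ * (x + l) - log (1 + x + l)) / (x + l) ^ 2
  have hf : ∀ᶠ x in 𝓝[≠] 0, HasDerivAt (fun x => log (1 + x + l) / (x + l)) (f' x) x := by
    filter_upwards [nhdsWithin_le_nhds (Ioi_mem_nhds (neg_lt_zero.2 hl))] with x (hx : -l < x)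
    refine (((hasDerivAt_id' x).const_add 1 |>.add_const l).log (by linarith)).div
      ((hasDerivAt_id' x).add_const l) (by linarith) |>.congr_deriv ?_
    simp only [f', div_eq_mul_inv]
    ring
  have hfc : ContinuousAt (fun x => log (1 + x + l) / (x + l)) 0 := by
    fun_prop (disch := simp; linarith)
  have hf'c : ContinuousAt f' 0 := by
    fun_prop (disch := simp; linarith)
  have hlim := tendsto_deriv_mul_div_log_one_add hf (hfc.tendsto.mono_left nhdsWithin_le_nhds)
    (hf'c.tendsto.mono_left nhdsWithin_le_nhds)
  refine ⟨?_, div_pos ?_ (by positivity)⟩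
  · convert hlim.mono_left (nhdsGT_le_nhdsNE 0) using 2
    simp only [f', add_zero, zero_add]
    field_simp
    ring
  · linarith [two_mul_add_mul_log_one_add_pos hl]
end
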